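/- Let $T$ be an invertible measure-preserving transformation of a probability space $(\Omega,\mathcal{B},\nu)$, let $\varphi \in L^\infty(\nu)$, and let $L \in \mathbb{R}$, $\kappa \in [0,1]$ satisfy $\nu\{x : \varphi(x) > L\} \le \kappa$. Then for any $\beta < L$, $\nu\{x : \varphi_j(x) \ge \beta j \text{ for all } j \ge 1\} \ge \frac{\int \varphi\, d\nu - \beta - \kappa\,\|\varphi - L\|_\infty}{L - \beta}$, where $\varphi_j(x) = \varphi(x) + \varphi(T x) + \cdots + \varphi(T^{j-1} x)$. -/

import Mathlib

/-!
Let `G` be the set of points whose Birkhoff sums satisfy `φⱼ ≥ β j` for all `j`. Its complement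
is the set where some Birkhoff sum of `β - φ` is positive, so the maximal ergodic theorem gives
`∫_{Gᶜ} φ ≤ β ν(Gᶜ)`. On `G`, the function `φ` exceeds `L` only on a set of measure at most `κ`,
and there by at most `‖φ - L‖∞`, so `∫_G φ ≤ L ν(G) + κ ‖φ - L‖∞`. Adding the two bounds and
using `ν(G) + ν(Gᶜ) = 1` gives `∫ φ - β - κ ‖φ - L‖∞ ≤ (L - β) ν(G)`.
-/

open MeasureTheory Filter

section MaximalErgodic

variable {Ω : Type*} {T : Ω → Ω} {f : Ω → ℝ}

/-- `maxBirkhoffSum T f n x = max (0, f₁ x, …, fₙ x)` for the Birkhoff sums `fₖ` of `f`, written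
through the recursion `M (n + 1) = max 0 (f + M n ∘ T)` on which Garsia's proof rests. -/
noncomputable def maxBirkhoffSum (T : Ω → Ω) (f : Ω → ℝ) : ℕ → Ω → ℝ
  | 0 => fun _ => 0
  | n + 1 => fun x => max 0 (f x + maxBirkhoffSum T f n (T x))

theorem maxBirkhoffSum_nonneg (n : ℕ) (x : Ω) : 0 ≤ maxBirkhoffSum T f n x := by
  cases n with
  | zero => exact le_rfl
  | succ n => exact le_max_left _ _

theorem maxBirkhoffSum_le_succ (n : ℕ) (x : Ω) :
    maxBirkhoffSum T f n x ≤ maxBirkhoffSum T f (n + 1) x := by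
  induction n generalizing x with
  | zero => exact maxBirkhoffSum_nonneg 1 x
  | succ n ih => exact max_le_max le_rfl (add_le_add le_rfl (ih (T x)))

theorem monotone_maxBirkhoffSum (x : Ω) : Monotone fun n => maxBirkhoffSum T f n x :=
  monotone_nat_of_le_succ fun n => maxBirkhoffSum_le_succ n x

theorem birkhoffSum_le_maxBirkhoffSum {k n : ℕ} (hkn : k ≤ n) (x : Ω) :
    birkhoffSum T f k x ≤ maxBirkhoffSum T f n x := by
  induction k generalizing n x with
  | zero => exact (birkhoffSum_zero T f x).trans_le (maxBirkhoffSum_nonneg n x)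
  | succ k ih =>
    obtain ⟨m, rfl⟩ : ∃ m, n = m + 1 := ⟨n - 1, by omega⟩
    rw [birkhoffSum_succ']
    exact (add_le_add le_rfl (ih (by omega) (T x))).trans (le_max_right _ _)

theorem exists_maxBirkhoffSum_eq_birkhoffSum (n : ℕ) (x : Ω) :
    ∃ k ≤ n, maxBirkhoffSum T f n x = birkhoffSum T f k x := by
  induction n generalizing x with
  | zero => exact ⟨0, le_rfl, (birkhoffSum_zero T f x).symm⟩
  | succ n ih =>
    obtain ⟨k, hkn, hk⟩ := ih (T x)
    rcases max_choice 0 (f x + maxBirkhoffSum T f n (T x)) with h | h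
    · exact ⟨0, n.zero_le.trans n.le_succ, h.trans (birkhoffSum_zero T f x).symm⟩
    · refine ⟨k + 1, by omega, h.trans ?_⟩
      rw [birkhoffSum_succ', hk]

theorem setOf_exists_birkhoffSum_pos :
    {x | ∃ k, 0 < birkhoffSum T f k x} = ⋃ n, {x | 0 < maxBirkhoffSum T f n x} := by
  ext x
  simp only [Set.mem_ofPred_eq, Set.mem_iUnion]
  constructor
  · rintro ⟨k, hk⟩
    exact ⟨k, hk.trans_le (birkhoffSum_le_maxBirkhoffSum le_rfl x)⟩
  · rintro ⟨n, hn⟩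
    obtain ⟨k, -, hk⟩ := exists_maxBirkhoffSum_eq_birkhoffSum (T := T) (f := f) n x
    exact ⟨k, hk ▸ hn⟩

theorem maxBirkhoffSum_sub_comp_le_indicator (n : ℕ) (x : Ω) :
    maxBirkhoffSum T f n x - maxBirkhoffSum T f n (T x)
      ≤ {y | 0 < maxBirkhoffSum T f n y}.indicator f x := by
  by_cases hx : 0 < maxBirkhoffSum T f n x
  · rw [Set.indicator_of_mem (show x ∈ {y | 0 < maxBirkhoffSum T f n y} from hx)]
    cases n with
    | zero => exact absurd hx (lt_irrefl 0)
    | succ m =>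
      have hmax : maxBirkhoffSum T f (m + 1) x = f x + maxBirkhoffSum T f m (T x) :=
        (max_choice _ _).resolve_left hx.ne'
      linarith [maxBirkhoffSum_le_succ (T := T) (f := f) m (T x)]
  · rw [Set.indicator_of_notMem (show x ∉ {y | 0 < maxBirkhoffSum T f n y} from hx)]
    linarith [maxBirkhoffSum_nonneg (T := T) (f := f) n (T x)]

variable [MeasurableSpace Ω] {ν : Measure Ω}

theorem measurable_maxBirkhoffSum (hT : Measurable T) (hf : Measurable f) (n : ℕ) :
    Measurable (maxBirkhoffSum T f n) := by
  induction n with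
  | zero => exact measurable_const
  | succ n ih => exact measurable_const.max (hf.add (ih.comp hT))

theorem integrable_maxBirkhoffSum (hT : MeasurePreserving T ν ν) (hf : Integrable f ν) (n : ℕ) :
    Integrable (maxBirkhoffSum T f n) ν := by
  induction n with
  | zero => exact integrable_zero Ω ℝ ν
  | succ n ih =>
    exact (integrable_zero Ω ℝ ν).sup (hf.add (hT.integrable_comp_of_integrable ih))

theorem setIntegral_maxBirkhoffSum_pos_nonneg (hT : MeasurePreserving T ν ν)
    (hfm : Measurable f) (hf : Integrable f ν) (n : ℕ) :
    0 ≤ ∫ x in {x | 0 < maxBirkhoffSum T f n x}, f x ∂ν := by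
  have hMm := measurable_maxBirkhoffSum hT.measurable hfm n
  have hE : MeasurableSet {x | 0 < maxBirkhoffSum T f n x} :=
    measurableSet_lt measurable_const hMm
  have hM := integrable_maxBirkhoffSum hT hf n
  have hMT : Integrable (fun x => maxBirkhoffSum T f n (T x)) ν :=
    hT.integrable_comp_of_integrable hM
  have hcomp : ∫ x, maxBirkhoffSum T f n (T x) ∂ν = ∫ x, maxBirkhoffSum T f n x ∂ν := by
    rw [← integral_map hT.measurable.aemeasurable (hT.map_eq ▸ hMm.aestronglyMeasurable),
      hT.map_eq]
  calc (0 : ℝ) = ∫ x, (maxBirkhoffSum T f n x - maxBirkhoffSum T f n (T x)) ∂ν := by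
        rw [integral_sub hM hMT, hcomp, sub_self]
    _ ≤ ∫ x, {y | 0 < maxBirkhoffSum T f n y}.indicator f x ∂ν :=
        integral_mono (hM.sub hMT) (hf.indicator hE) (maxBirkhoffSum_sub_comp_le_indicator n)
    _ = _ := integral_indicator hE

/-- The maximal ergodic theorem. -/
theorem setIntegral_exists_birkhoffSum_pos_nonneg (hT : MeasurePreserving T ν ν)
    (hfm : Measurable f) (hf : Integrable f ν) :
    0 ≤ ∫ x in {x | ∃ k, 0 < birkhoffSum T f k x}, f x ∂ν := by
  rw [setOf_exists_birkhoffSum_pos]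
  refine ge_of_tendsto' (tendsto_setIntegral_of_monotone (fun n => ?_) (fun m n hmn x hx => ?_)
    hf.integrableOn) (setIntegral_maxBirkhoffSum_pos_nonneg hT hfm hf)
  · exact measurableSet_lt measurable_const (measurable_maxBirkhoffSum hT.measurable hfm n)
  · exact hx.trans_le (monotone_maxBirkhoffSum x hmn)

end MaximalErgodic

section Pliss

variable {Ω : Type*} {T : Ω → Ω} {g : Ω → ℝ}

theorem compl_setOf_forall_mul_le_birkhoffSum (β : ℝ) :
    {x | ∀ k : ℕ, β * k ≤ birkhoffSum T g k x}ᶜ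
      = {x | ∃ k, 0 < birkhoffSum T (fun y => β - g y) k x} := by
  ext x
  simp [birkhoffSum, mul_comm]

variable [MeasurableSpace Ω] {ν : Measure Ω}

theorem measurable_birkhoffSum (hT : Measurable T) (hg : Measurable g) (n : ℕ) :
    Measurable (birkhoffSum T g n) :=
  Finset.measurable_sum _ fun i _ => hg.comp (hT.iterate i)

theorem MeasureTheory.MemLp.ae_abs_sub_le_essSup {φ : Ω → ℝ} (hφ : MemLp φ ⊤ ν) (L : ℝ) :
    ∀ᵐ x ∂ν, |φ x - L| ≤ essSup (fun x => |φ x - L|) ν := by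
  obtain ⟨C, hC⟩ := (eLpNormEssSup_lt_top_iff_isBoundedUnder (f := φ) (μ := ν)).1
    (eLpNorm_exponent_top (f := φ) (μ := ν) ▸ hφ.eLpNorm_lt_top)
  refine ae_le_essSup ⟨C + |L|, eventually_map.2 ?_⟩
  filter_upwards [eventually_map.1 hC] with x hx
  calc |φ x - L| ≤ |φ x| + |L| := abs_sub _ _
    _ ≤ C + |L| := by gcongr; simpa using NNReal.coe_le_coe.2 hx

theorem setIntegral_compl_setOf_forall_mul_le_birkhoffSum_le [IsFiniteMeasure ν]
    (hT : MeasurePreserving T ν ν) (hgm : Measurable g) (hg : Integrable g ν) (β : ℝ) :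
    ∫ x in {x | ∀ k : ℕ, β * k ≤ birkhoffSum T g k x}ᶜ, g x ∂ν
      ≤ β * ν.real {x | ∀ k : ℕ, β * k ≤ birkhoffSum T g k x}ᶜ := by
  have hmax : 0 ≤ ∫ x in {x | ∀ k : ℕ, β * k ≤ birkhoffSum T g k x}ᶜ, (β - g x) ∂ν := by
    rw [compl_setOf_forall_mul_le_birkhoffSum]
    exact setIntegral_exists_birkhoffSum_pos_nonneg hT (measurable_const.sub hgm)
      ((integrable_const β).sub hg)
  rw [integral_sub (integrable_const β) hg.integrableOn, setIntegral_const, smul_eq_mul] at hmax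
  linarith

theorem setIntegral_le_of_measure_setOf_lt_le [IsFiniteMeasure ν] (hgm : Measurable g)
    (hg : Integrable g ν) {L κ M : ℝ} (hκ : 0 ≤ κ) (hlevel : ν {x | L < g x} ≤ ENNReal.ofReal κ)
    (hM : ∀ᵐ x ∂ν, |g x - L| ≤ M) (hM0 : 0 ≤ M) (A : Set Ω) :
    ∫ x in A, g x ∂ν ≤ L * ν.real A + κ * M := by
  set S := {x | L < g x}
  have hS : MeasurableSet S := measurableSet_lt measurable_const hgm
  have hle : ∀ᵐ x ∂ν.restrict A, g x - L ≤ S.indicator (fun _ => M) x := by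
    refine ae_restrict_of_ae ?_
    filter_upwards [hM] with x hx
    by_cases hxS : x ∈ S
    · rw [Set.indicator_of_mem hxS]; exact (le_abs_self _).trans hx
    · rw [Set.indicator_of_notMem hxS]; exact sub_nonpos.2 (not_lt.1 hxS)
  have hAS : ν.real (A ∩ S) ≤ κ :=
    ENNReal.toReal_le_of_le_ofReal hκ ((measure_mono Set.inter_subset_right).trans hlevel)
  have key : ∫ x in A, (g x - L) ∂ν ≤ κ * M :=
    calc ∫ x in A, (g x - L) ∂ν ≤ ∫ x in A, S.indicator (fun _ => M) x ∂ν :=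
          integral_mono_ae (hg.sub (integrable_const L)).integrableOn
            ((integrable_const M).indicator hS).integrableOn hle
      _ = ν.real (A ∩ S) * M := by rw [setIntegral_indicator hS, setIntegral_const, smul_eq_mul]
      _ ≤ κ * M := by gcongr
  rw [integral_sub hg.integrableOn (integrable_const L), setIntegral_const, smul_eq_mul] at key
  linarith

theorem measure_setOf_forall_mul_le_birkhoffSum_congr {φ : Ω → ℝ}
    (hT : Measure.QuasiMeasurePreserving T ν ν) (hφg : φ =ᵐ[ν] g) (β : ℝ) :
    ν {x | ∀ j : ℕ, 1 ≤ j → β * j ≤ birkhoffSum T φ j x}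
      = ν {x | ∀ k : ℕ, β * k ≤ birkhoffSum T g k x} := by
  refine measure_congr ?_
  filter_upwards [ae_all_iff.2 fun j => hT.birkhoffSum_ae_eq_of_ae_eq hφg j] with x hx
  refine propext ⟨fun h j => ?_, fun h j _ => hx j ▸ h j⟩
  rcases j with _ | j
  · simp
  · exact hx (j + 1) ▸ h (j + 1) j.succ_pos

theorem integral_sub_le_mul_measureReal_setOf_forall_mul_le_birkhoffSum [IsProbabilityMeasure ν]
    (hT : MeasurePreserving T ν ν) (hgm : Measurable g) (hg : Integrable g ν) {L κ M : ℝ}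
    (hκ : 0 ≤ κ) (hlevel : ν {x | L < g x} ≤ ENNReal.ofReal κ) (hM : ∀ᵐ x ∂ν, |g x - L| ≤ M)
    (hM0 : 0 ≤ M) (β : ℝ) :
    ∫ x, g x ∂ν - β - κ * M ≤ (L - β) * ν.real {x | ∀ k : ℕ, β * k ≤ birkhoffSum T g k x} := by
  set G := {x | ∀ k : ℕ, β * k ≤ birkhoffSum T g k x}
  have hG : MeasurableSet G := by
    simp only [G, Set.ofPred_forall]
    exact .iInter fun k =>
      measurableSet_le measurable_const (measurable_birkhoffSum hT.measurable hgm k)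
  have hbad : ∫ x in Gᶜ, g x ∂ν ≤ β * (1 - ν.real G) := by
    rw [← probReal_compl_eq_one_sub hG]
    exact setIntegral_compl_setOf_forall_mul_le_birkhoffSum_le hT hgm hg β
  have hgood := setIntegral_le_of_measure_setOf_lt_le hgm hg hκ hlevel hM hM0 G
  have hsplit := integral_add_compl hG hg
  linarith

end Pliss

theorem pliss_lemma_general {Ω : Type*} [MeasurableSpace Ω] (ν : Measure Ω)
    [IsProbabilityMeasure ν] (T : Ω → Ω) (hT : MeasurePreserving T ν ν)
    (φ : Ω → ℝ) (hφ : MemLp φ ⊤ ν)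
    (L κ : ℝ) (hκ0 : 0 ≤ κ)
    (hlevel : ν {x | L < φ x} ≤ ENNReal.ofReal κ)
    (β : ℝ) (hβ : β < L) :
    (∫ x, φ x ∂ν - β - κ * essSup (fun x => |φ x - L|) ν) / (L - β)
      ≤ (ν {x | ∀ j : ℕ, 1 ≤ j → β * j ≤ birkhoffSum T φ j x}).toReal := by
  obtain ⟨g, hgm, hφg⟩ := hφ.1.aemeasurable
  have hg : Integrable g ν := (hφ.integrable le_top).congr hφg
  have hM : ∀ᵐ x ∂ν, |g x - L| ≤ essSup (fun x => |φ x - L|) ν := by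
    filter_upwards [hφ.ae_abs_sub_le_essSup L, hφg] with x hx hxg
    rwa [← hxg]
  have hM0 : 0 ≤ essSup (fun x => |φ x - L|) ν := by
    obtain ⟨x, hx⟩ := hM.exists
    exact (abs_nonneg _).trans hx
  have hglevel : ν {x | L < g x} ≤ ENNReal.ofReal κ := by
    refine (measure_congr ?_).trans_le hlevel
    filter_upwards [hφg] with x hx
    change (L < g x) = (L < φ x)
    rw [hx]
  rw [measure_setOf_forall_mul_le_birkhoffSum_congr hT.quasiMeasurePreserving hφg,
    div_le_iff₀ (sub_pos.2 hβ), integral_congr_ae hφg]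
  exact (integral_sub_le_mul_measureReal_setOf_forall_mul_le_birkhoffSum hT hgm hg hκ0 hglevel
    hM hM0 β).trans_eq (mul_comm _ _)

/-- Pliss-type lemma (Lemma 2.18 of Burguet–Crovisier–Sarig style). -/
theorem pliss_lemma {Ω : Type*} [MeasurableSpace Ω] (ν : Measure Ω)
    [IsProbabilityMeasure ν] (T : Ω → Ω) (hT : MeasurePreserving T ν ν)
    (hTbij : Function.Bijective T)
    (φ : Ω → ℝ) (hφ : MemLp φ ⊤ ν)
    (L κ : ℝ) (hκ0 : 0 ≤ κ) (hκ1 : κ ≤ 1)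
    (hlevel : ν {x | L < φ x} ≤ ENNReal.ofReal κ)
    (β : ℝ) (hβ : β < L) :
    (∫ x, φ x ∂ν - β - κ * essSup (fun x => |φ x - L|) ν) / (L - β)
      ≤ (ν {x | ∀ j : ℕ, 1 ≤ j → β * j ≤ birkhoffSum T φ j x}).toReal :=
  pliss_lemma_general ν T hT φ hφ L κ hκ0 hlevel β hβ
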